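/- arXiv:2102.01635 — 4 statements merged into one kernel-verified Lean document; each statement's English description precedes it below -/
import Mathlib

section
/- Let ε > 0, 0 < α ≤ β, q ∈ [0,1], let N ≥ 1 and k be natural numbers with k ≤ N, and let a, b ∈ ℝ satisfy ε/β ≤ a ≤ ε/α, a + b ≥ ε/β, and |b| ≤ ε·q·(1/α − 1/β). Set H := Nε and θ := k/N. Then Na + kb > 0, Na + b > 0, and | H/(Na + kb) − ( (1 − k)·H/(Na) + k·H/(Na + b) ) | ≤ q² β³ (1/α − 1/β)² ( (ε/H)·θ + 2θ² ). -/
/-!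
Writing `D_t = N a + t b`, the difference between `H / D_k` and the
affine combination `(1 - k) H / D_0 + k H / D_1` is exactly `k (k - 1) b² H / (D_0 D_1 D_k)`:
the affine interpolation of `t ↦ 1 / D_t` is exact at `t = 0, 1`, so the error is quadratic in `b`.
Each `D_t` with `0 ≤ t ≤ N` is a convex combination of `a` and `a + b` scaled by `N`, hence at
least `N ε / β`, and `b² ≤ ε² q² (1/α - 1/β)²`; together these give the bound.
-/

theorem div_add_mul_sub_affine_eq {K : Type*} [Field K] (A b t H : K)
    (hA : A ≠ 0) (hA₁ : A + b ≠ 0) (hAt : A + t * b ≠ 0) :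
    H / (A + t * b) - ((1 - t) * H / A + t * H / (A + b))
      = t * (t - 1) * b ^ 2 * H / (A * (A + b) * (A + t * b)) := by
  field_simp
  ring

theorem mul_le_mul_add_mul_of_le {m a b t n : ℝ} (ha : m ≤ a) (hab : m ≤ a + b)
    (ht₀ : 0 ≤ t) (htn : t ≤ n) : n * m ≤ n * a + t * b := by
  nlinarith [mul_le_mul_of_nonneg_left ha (sub_nonneg.2 htn), mul_le_mul_of_nonneg_left hab ht₀]

theorem div_mul_mul_le_div_pow_three {x d A B C : ℝ} (hx : 0 ≤ x) (hd : 0 < d)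
    (hA : d ≤ A) (hB : d ≤ B) (hC : d ≤ C) : x / (A * B * C) ≤ x / d ^ 3 := by
  apply div_le_div_of_nonneg_left hx (by positivity)
  have hA₀ : 0 ≤ A := hd.le.trans hA
  have hB₀ : 0 ≤ B := hd.le.trans hB
  calc d ^ 3 = d * d * d := by ring
    _ ≤ A * B * C := by gcongr

theorem natCast_mul_natCast_sub_one_nonneg (k : ℕ) : 0 ≤ (k : ℝ) * ((k : ℝ) - 1) := by
  rcases k.eq_zero_or_pos with rfl | hk
  · simp
  · have : (1 : ℝ) ≤ k := by exact_mod_cast hk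
    nlinarith

theorem natCast_mul_sub_one_mul_sq_le {k : ℕ} {b c : ℝ} (hb : |b| ≤ c) :
    (k : ℝ) * (k - 1) * b ^ 2 ≤ (k + 2 * k ^ 2) * c ^ 2 :=
  calc (k : ℝ) * (k - 1) * b ^ 2 ≤ (k : ℝ) * (k - 1) * c ^ 2 :=
        mul_le_mul_of_nonneg_left (sq_le_sq.2 (hb.trans (le_abs_self c)))
          (natCast_mul_natCast_sub_one_nonneg k)
    _ ≤ (k + 2 * k ^ 2) * c ^ 2 := by
        gcongr
        nlinarith [k.cast_nonneg (α := ℝ)]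

theorem stmt_2_general (ε α β q a b : ℝ) (N k : ℕ)
    (hε : 0 < ε) (hα : 0 < α) (hαβ : α ≤ β)
    (hN : 1 ≤ N) (hk : k ≤ N)
    (ha1 : ε / β ≤ a)
    (hab : ε / β ≤ a + b)
    (hb : |b| ≤ ε * q * (1 / α - 1 / β)) :
    let H : ℝ := (N : ℝ) * ε
    let θ : ℝ := (k : ℝ) / (N : ℝ)
    0 < (N : ℝ) * a + (k : ℝ) * b ∧ 0 < (N : ℝ) * a + b ∧
    |H / ((N : ℝ) * a + (k : ℝ) * b)
        - ((1 - (k : ℝ)) * H / ((N : ℝ) * a) + (k : ℝ) * H / ((N : ℝ) * a + b))|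
      ≤ q ^ 2 * β ^ 3 * (1 / α - 1 / β) ^ 2 * ((ε / H) * θ + 2 * θ ^ 2) := by
  intro H θ
  have hβ : 0 < β := hα.trans_le hαβ
  have hN₁ : (1 : ℝ) ≤ N := by exact_mod_cast hN
  have hkN : (k : ℝ) ≤ N := by exact_mod_cast hk
  have hm : 0 < (N : ℝ) * (ε / β) := by positivity
  have hD₀ : (N : ℝ) * (ε / β) ≤ N * a := by gcongr
  have hD₁ : (N : ℝ) * (ε / β) ≤ N * a + b := by
    simpa using mul_le_mul_add_mul_of_le ha1 hab zero_le_one hN₁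
  have hDk : (N : ℝ) * (ε / β) ≤ N * a + k * b :=
    mul_le_mul_add_mul_of_le ha1 hab k.cast_nonneg hkN
  have hnum : 0 ≤ (k : ℝ) * (k - 1) * b ^ 2 * H :=
    mul_nonneg (mul_nonneg (natCast_mul_natCast_sub_one_nonneg k) (sq_nonneg b)) (by positivity)
  have hD₀pos := hm.trans_le hD₀
  have hD₁pos := hm.trans_le hD₁
  have hDkpos := hm.trans_le hDk
  refine ⟨hDkpos, hD₁pos, ?_⟩
  rw [div_add_mul_sub_affine_eq _ _ _ _ hD₀pos.ne' hD₁pos.ne' hDkpos.ne',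
    abs_of_nonneg (by positivity)]
  calc (k : ℝ) * (k - 1) * b ^ 2 * H / (N * a * (N * a + b) * (N * a + k * b))
      ≤ (k : ℝ) * (k - 1) * b ^ 2 * H / (N * (ε / β)) ^ 3 :=
        div_mul_mul_le_div_pow_three hnum hm hD₀ hD₁ hDk
    _ = (k : ℝ) * (k - 1) * b ^ 2 * β ^ 3 / (N ^ 2 * ε ^ 2) := by
        simp only [H]; field_simp
    _ ≤ (k + 2 * k ^ 2) * (ε * q * (1 / α - 1 / β)) ^ 2 * β ^ 3 / (N ^ 2 * ε ^ 2) := by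
        gcongr ?_ * _ / _
        exact natCast_mul_sub_one_mul_sq_le hb
    _ = q ^ 2 * β ^ 3 * (1 / α - 1 / β) ^ 2 * ((ε / H) * θ + 2 * θ ^ 2) := by
        simp only [H, θ]; field_simp

/-- Algebraic core of the 1D consistency error theorem: difference between the
harmonic mean of the sample coefficient with `k` defects and the linear
combination of the offline harmonic means. -/
theorem stmt_2 (ε α β q a b : ℝ) (N k : ℕ)
    (hε : 0 < ε) (hα : 0 < α) (hαβ : α ≤ β)
    (hq0 : 0 ≤ q) (hq1 : q ≤ 1) (hN : 1 ≤ N) (hk : k ≤ N)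
    (ha1 : ε / β ≤ a) (ha2 : a ≤ ε / α)
    (hab : ε / β ≤ a + b)
    (hb : |b| ≤ ε * q * (1 / α - 1 / β)) :
    let H : ℝ := (N : ℝ) * ε
    let θ : ℝ := (k : ℝ) / (N : ℝ)
    0 < (N : ℝ) * a + (k : ℝ) * b ∧ 0 < (N : ℝ) * a + b ∧
    |H / ((N : ℝ) * a + (k : ℝ) * b)
        - ((1 - (k : ℝ)) * H / ((N : ℝ) * a) + (k : ℝ) * H / ((N : ℝ) * a + b))|
      ≤ q ^ 2 * β ^ 3 * (1 / α - 1 / β) ^ 2 * ((ε / H) * θ + 2 * θ ^ 2) :=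
  stmt_2_general ε α β q a b N k hε hα hαβ hN hk ha1 hab hb
end

section
/- Let N ≥ 1 be a natural number, S ⊆ {0,…,N−1} a defect set of cardinality k, H := Nε, θ := k/N, and let A be the associated sample coefficient on [0,H]. Define the harmonic mean A_harm := H / ∫_0^H (1/A(x)) dx and the combined offline harmonic mean A_harm^μ := (1−k)·H/(N·Ā) + k·H/(N·Ā + Ā_def). Then |A_harm − A_harm^μ| ≤ |Q|² β³ (1/α − 1/β)² ( (ε/H)·θ + 2θ² ). -/
open MeasureTheory intervalIntegral Set

/-!
Cut `[0, H]` into the `N` cells `[ε j, ε (j + 1)]`. Inside cell `j` only the `j`-th defect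
interval can occur, so by periodicity `∫₀ᴴ 1/A = N Ā + k Ā_def`. Writing `a = N Ā` and
`d = Ā_def`, the error is then exactly `H k (k - 1) d² / (a (a + d) (a + k d))`. The three
factors of the denominator are `∫₀ᴴ 1/A` for the sample coefficients with no defect, one defect
and `k` defects, so each is at least `H / β`; moreover `|d| ≤ ε |Q| (1/α - 1/β)` and
`k (k - 1) ≤ k + 2 k²`.
-/

lemma Function.Periodic.intervalIntegral_add_nat_mul {f : ℝ → ℝ} {T : ℝ}
    (hf : Function.Periodic f T) (n : ℕ) (a b : ℝ) :
    ∫ x in (a + n * T)..(b + n * T), f x = ∫ x in a..b, f x := by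
  rw [← integral_comp_add_right]
  exact integral_congr fun x _ => hf.nat_mul n x

lemma Function.Periodic.intervalIntegral_comp_div_add_nat {F : ℝ → ℝ}
    (hF : Function.Periodic F 1) (ε : ℝ) (j : ℕ) (a b : ℝ) :
    ∫ x in (ε * (j + a))..(ε * (j + b)), F (x / ε) = ∫ x in (ε * a)..(ε * b), F (x / ε) := by
  convert (hF.div_const ε).intervalIntegral_add_nat_mul j (ε * a) (ε * b) using 2 <;> ring

lemma intervalIntegrable_one_div_of_le {f : ℝ → ℝ} {α : ℝ} (hf : Measurable f) (hα : 0 < α)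
    (hfα : ∀ x, α ≤ f x) (a b : ℝ) : IntervalIntegrable (fun x => 1 / f x) volume a b := by
  refine (intervalIntegrable_const (c := 1 / α)).mono_fun'
    (measurable_const.div hf).aestronglyMeasurable (.of_forall fun x => ?_)
  change ‖1 / f x‖ ≤ 1 / α
  rw [Real.norm_eq_abs, abs_of_pos (one_div_pos.2 (hα.trans_le (hfα x)))]
  exact one_div_le_one_div_of_le hα (hfα x)

lemma div_le_integral_one_div {f : ℝ → ℝ} {a b β : ℝ} (hab : a ≤ b) (hf : ∀ x, 0 < f x)
    (hfβ : ∀ x, f x ≤ β) (hi : IntervalIntegrable (fun x => 1 / f x) volume a b) :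
    (b - a) / β ≤ ∫ x in a..b, 1 / f x := by
  calc (b - a) / β = ∫ _ in a..b, 1 / β := by
        rw [intervalIntegral.integral_const, smul_eq_mul]
        ring
    _ ≤ ∫ x in a..b, 1 / f x :=
      integral_mono_on hab intervalIntegrable_const hi
        fun x _ => one_div_le_one_div_of_le (hf x) (hfβ x)

lemma abs_one_div_sub_one_div_le {u v α β : ℝ} (hα : 0 < α) (hu : u ∈ Icc α β)
    (hv : v ∈ Icc α β) : |1 / u - 1 / v| ≤ 1 / α - 1 / β := by
  have bounds : ∀ w ∈ Icc α β, 1 / β ≤ 1 / w ∧ 1 / w ≤ 1 / α := fun w hw =>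
    ⟨one_div_le_one_div_of_le (hα.trans_le hw.1) hw.2, one_div_le_one_div_of_le hα hw.1⟩
  obtain ⟨hu₁, hu₂⟩ := bounds u hu
  obtain ⟨hv₁, hv₂⟩ := bounds v hv
  exact abs_sub_le_iff.2 ⟨by linarith, by linarith⟩

lemma abs_integral_one_div_sub_one_div_le {u v : ℝ → ℝ} {α β : ℝ} (hα : 0 < α)
    (hu : ∀ x, u x ∈ Icc α β) (hv : ∀ x, v x ∈ Icc α β) (a b : ℝ) :
    |∫ x in a..b, (1 / u x - 1 / v x)| ≤ (1 / α - 1 / β) * |b - a| := by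
  simpa only [Real.norm_eq_abs] using
    norm_integral_le_of_norm_le_const (f := fun x => 1 / u x - 1 / v x)
      fun x _ => abs_one_div_sub_one_div_le hα (hu x) (hv x)

lemma natCast_mul_sub_one_nonneg (k : ℕ) : 0 ≤ (k : ℝ) * (k - 1) := by
  rcases k with _ | k
  · simp
  · push_cast
    nlinarith

lemma div_sub_harmonic_combination_eq (H a d k : ℝ) (ha : a ≠ 0) (had : a + d ≠ 0)
    (hakd : a + k * d ≠ 0) :
    H / (a + k * d) - ((1 - k) * H / a + k * H / (a + d))
      = H * (k * (k - 1)) * d ^ 2 / (a * (a + d) * (a + k * d)) := by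
  field_simp
  ring

lemma abs_div_sub_harmonic_combination_le {H a d m : ℝ} (k : ℕ) (hH : 0 ≤ H) (hm : 0 < m)
    (ha : m ≤ a) (had : m ≤ a + d) (hakd : m ≤ a + k * d) :
    |H / (a + k * d) - ((1 - k) * H / a + k * H / (a + d))|
      ≤ H * (k * (k - 1)) * d ^ 2 / m ^ 3 := by
  have hnum : 0 ≤ H * (k * (k - 1)) * d ^ 2 :=
    mul_nonneg (mul_nonneg hH (natCast_mul_sub_one_nonneg k)) (sq_nonneg d)
  have hden : m ^ 3 ≤ a * (a + d) * (a + k * d) :=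
    calc m ^ 3 = m * m * m := by ring
      _ ≤ a * (a + d) * (a + k * d) := by
        gcongr
        · exact mul_nonneg (hm.le.trans ha) (hm.le.trans had)
        all_goals linarith
  rw [div_sub_harmonic_combination_eq H a d k (by linarith) (by linarith) (by linarith),
    abs_of_nonneg (div_nonneg hnum ((pow_pos hm 3).le.trans hden))]
  exact div_le_div_of_nonneg_left hnum (by positivity) hden

lemma consistency_bound_of_abs_le {N : ℕ} (hN : 0 < N) (k : ℕ) {ε β c q d : ℝ} (hε : 0 < ε)
    (hβ : 0 < β) (hd : |d| ≤ c * (ε * q)) :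
    N * ε * (k * (k - 1)) * d ^ 2 / (N * ε / β) ^ 3
      ≤ q ^ 2 * β ^ 3 * c ^ 2 * ((ε / (N * ε)) * (k / N) + 2 * (k / N) ^ 2) := by
  have hN' : (0 : ℝ) < N := by exact_mod_cast hN
  have hd2 : d ^ 2 ≤ (c * (ε * q)) ^ 2 := sq_le_sq.2 (hd.trans (le_abs_self _))
  have hk : (k : ℝ) * (k - 1) ≤ k + 2 * k ^ 2 := by nlinarith [(k.cast_nonneg : (0 : ℝ) ≤ k)]
  calc N * ε * (k * (k - 1)) * d ^ 2 / (N * ε / β) ^ 3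
      = β ^ 3 / (N ^ 2 * ε ^ 2) * (k * (k - 1)) * d ^ 2 := by field_simp
    _ ≤ β ^ 3 / (N ^ 2 * ε ^ 2) * (k + 2 * k ^ 2) * (c * (ε * q)) ^ 2 := by
      gcongr
    _ = q ^ 2 * β ^ 3 * c ^ 2 * ((ε / (N * ε)) * (k / N) + 2 * (k / N) ^ 2) := by
      field_simp

def defectSet (ε q₀ q₁ : ℝ) (S : Finset ℕ) : Set ℝ :=
  ⋃ j ∈ S, Icc (ε * ((j : ℝ) + q₀)) (ε * ((j : ℝ) + q₁))

open Classical in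
noncomputable def sampleCoeff (Aper Bper : ℝ → ℝ) (ε q₀ q₁ : ℝ) (S : Finset ℕ) (x : ℝ) : ℝ :=
  if x ∈ defectSet ε q₀ q₁ S then Aper (x / ε) + Bper (x / ε) else Aper (x / ε)

section SampleCoeff

variable {Aper Bper : ℝ → ℝ} {α β ε q₀ q₁ : ℝ} {S : Finset ℕ}

lemma mem_defectSet {x : ℝ} :
    x ∈ defectSet ε q₀ q₁ S ↔ ∃ j ∈ S, x ∈ Icc (ε * ((j : ℝ) + q₀)) (ε * ((j : ℝ) + q₁)) := by
  simp only [defectSet, mem_iUnion, exists_prop]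

lemma measurableSet_defectSet : MeasurableSet (defectSet ε q₀ q₁ S) :=
  Finset.measurableSet_biUnion S fun _ _ => measurableSet_Icc

lemma measurable_sampleCoeff (hA : Measurable Aper) (hB : Measurable Bper) :
    Measurable (sampleCoeff Aper Bper ε q₀ q₁ S) :=
  Measurable.ite measurableSet_defectSet
    ((hA.comp (measurable_id.div_const ε)).add (hB.comp (measurable_id.div_const ε)))
    (hA.comp (measurable_id.div_const ε))

lemma sampleCoeff_mem {s : Set ℝ} (hA : ∀ y, Aper y ∈ s) (hAB : ∀ y, Aper y + Bper y ∈ s)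
    (x : ℝ) : sampleCoeff Aper Bper ε q₀ q₁ S x ∈ s := by
  unfold sampleCoeff
  split_ifs
  exacts [hAB _, hA _]

lemma mem_defectSet_iff_of_mem_Ioo (hε : 0 < ε) (hq₀ : 0 ≤ q₀) (hq₁ : q₁ ≤ 1) {j : ℕ} {x : ℝ}
    (hx : x ∈ Ioo (ε * j) (ε * (j + 1))) :
    x ∈ defectSet ε q₀ q₁ S ↔ j ∈ S ∧ x ∈ Icc (ε * ((j : ℝ) + q₀)) (ε * ((j : ℝ) + q₁)) := by
  rw [mem_defectSet]
  refine ⟨fun ⟨i, hi, hxi⟩ => ?_, fun ⟨hj, hxj⟩ => ⟨j, hj, hxj⟩⟩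
  have hij : (i : ℝ) < j + 1 := lt_of_mul_lt_mul_left (by nlinarith [hxi.1, hx.2]) hε.le
  have hji : (j : ℝ) < i + 1 := lt_of_mul_lt_mul_left (by nlinarith [hxi.2, hx.1]) hε.le
  obtain rfl : i = j := by
    norm_cast at hij hji
    omega
  exact ⟨hi, hxi⟩

lemma sampleCoeff_eq_of_mem_Ioo (hε : 0 < ε) (hq₀ : 0 ≤ q₀) (hq₁ : q₁ ≤ 1) {j : ℕ} {x : ℝ}
    (hx : x ∈ Ioo (ε * j) (ε * (j + 1))) :
    sampleCoeff Aper Bper ε q₀ q₁ S x =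
      if j ∈ S ∧ x ∈ Icc (ε * ((j : ℝ) + q₀)) (ε * ((j : ℝ) + q₁))
      then Aper (x / ε) + Bper (x / ε) else Aper (x / ε) := by
  simp only [sampleCoeff, mem_defectSet_iff_of_mem_Ioo hε hq₀ hq₁ hx]

lemma integral_one_div_sampleCoeff_cell (hε : 0 < ε) (hq₀ : 0 ≤ q₀) (hq₀₁ : q₀ ≤ q₁) (hq₁ : q₁ ≤ 1)
    (hi : ∀ a b, IntervalIntegrable (fun x => 1 / sampleCoeff Aper Bper ε q₀ q₁ S x) volume a b)
    (hiA : ∀ a b, IntervalIntegrable (fun x => 1 / Aper (x / ε)) volume a b)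
    (hiAB : ∀ a b, IntervalIntegrable (fun x => 1 / (Aper (x / ε) + Bper (x / ε))) volume a b)
    (j : ℕ) :
    ∫ x in (ε * j)..(ε * (j + 1)), 1 / sampleCoeff Aper Bper ε q₀ q₁ S x
      = (∫ x in (ε * j)..(ε * (j + 1)), 1 / Aper (x / ε))
        + if j ∈ S then ∫ x in (ε * (j + q₀))..(ε * (j + q₁)),
            (1 / (Aper (x / ε) + Bper (x / ε)) - 1 / Aper (x / ε)) else 0 := by
  set c₀ := ε * (j : ℝ)
  set c₁ := ε * ((j : ℝ) + q₀)
  set c₂ := ε * ((j : ℝ) + q₁)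
  set c₃ := ε * ((j : ℝ) + 1)
  have h₀₁ : c₀ ≤ c₁ := by nlinarith
  have h₁₂ : c₁ ≤ c₂ := by nlinarith
  have h₂₃ : c₂ ≤ c₃ := by nlinarith
  have split : ∀ f : ℝ → ℝ, (∀ a b, IntervalIntegrable f volume a b) →
      ∫ x in c₀..c₃, f x = (∫ x in c₀..c₁, f x) + (∫ x in c₁..c₂, f x) + ∫ x in c₂..c₃, f x :=
    fun f hf => by
      rw [integral_add_adjacent_intervals (hf _ _) (hf _ _),
        integral_add_adjacent_intervals (hf _ _) (hf _ _)]
  have left : ∫ x in c₀..c₁, 1 / sampleCoeff Aper Bper ε q₀ q₁ S x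
      = ∫ x in c₀..c₁, 1 / Aper (x / ε) := by
    refine integral_congr_uIoo fun x hx => ?_
    rw [uIoo_of_le h₀₁] at hx
    rw [sampleCoeff_eq_of_mem_Ioo hε hq₀ hq₁ ⟨hx.1, by linarith [hx.2]⟩,
      if_neg fun h => by linarith [h.2.1, hx.2]]
  have right : ∫ x in c₂..c₃, 1 / sampleCoeff Aper Bper ε q₀ q₁ S x
      = ∫ x in c₂..c₃, 1 / Aper (x / ε) := by
    refine integral_congr_uIoo fun x hx => ?_
    rw [uIoo_of_le h₂₃] at hx
    rw [sampleCoeff_eq_of_mem_Ioo hε hq₀ hq₁ ⟨by linarith [hx.1], hx.2⟩,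
      if_neg fun h => by linarith [h.2.2, hx.1]]
  have middle : ∀ x ∈ uIoo c₁ c₂, sampleCoeff Aper Bper ε q₀ q₁ S x =
      if j ∈ S then Aper (x / ε) + Bper (x / ε) else Aper (x / ε) := fun x hx => by
    rw [uIoo_of_le h₁₂] at hx
    rw [sampleCoeff_eq_of_mem_Ioo hε hq₀ hq₁ ⟨by linarith [hx.1], by linarith [hx.2]⟩]
    exact if_congr (and_iff_left (Ioo_subset_Icc_self hx)) rfl rfl
  rw [split _ hi, split _ hiA, left, right]
  split_ifs with hj
  · have defect : ∫ x in c₁..c₂, 1 / sampleCoeff Aper Bper ε q₀ q₁ S x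
        = ∫ x in c₁..c₂, 1 / (Aper (x / ε) + Bper (x / ε)) :=
      integral_congr_uIoo fun x hx => by simp only [middle x hx, if_pos hj]
    rw [defect, integral_sub (hiAB _ _) (hiA _ _)]
    ring
  · have intact : ∫ x in c₁..c₂, 1 / sampleCoeff Aper Bper ε q₀ q₁ S x
        = ∫ x in c₁..c₂, 1 / Aper (x / ε) :=
      integral_congr_uIoo fun x hx => by simp only [middle x hx, if_neg hj]
    rw [intact, add_zero]

lemma integral_one_div_sampleCoeff (hε : 0 < ε) (hq₀ : 0 ≤ q₀) (hq₀₁ : q₀ ≤ q₁) (hq₁ : q₁ ≤ 1)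
    (hAm : Measurable Aper) (hBm : Measurable Bper)
    (hAp : Function.Periodic Aper 1) (hBp : Function.Periodic Bper 1)
    (hα : 0 < α) (hA : ∀ y, α ≤ Aper y) (hAB : ∀ y, α ≤ Aper y + Bper y)
    {N : ℕ} (hS : S ⊆ Finset.range N) :
    ∫ x in (0 : ℝ)..(N * ε), 1 / sampleCoeff Aper Bper ε q₀ q₁ S x
      = N * (∫ x in (0 : ℝ)..ε, 1 / Aper (x / ε))
        + S.card * ∫ x in (ε * q₀)..(ε * q₁),
            (1 / (Aper (x / ε) + Bper (x / ε)) - 1 / Aper (x / ε)) := by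
  have hAm' : Measurable fun x => Aper (x / ε) := hAm.comp (measurable_id.div_const ε)
  have hi := intervalIntegrable_one_div_of_le (measurable_sampleCoeff hAm hBm) hα
    (sampleCoeff_mem (s := Ici α) (ε := ε) (q₀ := q₀) (q₁ := q₁) (S := S) hA hAB)
  have hiA := intervalIntegrable_one_div_of_le hAm' hα fun x => hA (x / ε)
  have hABm' : Measurable fun x => Aper (x / ε) + Bper (x / ε) :=
    hAm'.add (hBm.comp (measurable_id.div_const ε))
  have hiAB := intervalIntegrable_one_div_of_le hABm' hα fun x => hAB (x / ε)
  have cell : ∀ j : ℕ, ∫ x in (ε * j)..(ε * (j + 1)), 1 / sampleCoeff Aper Bper ε q₀ q₁ S x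
      = (∫ x in (0 : ℝ)..ε, 1 / Aper (x / ε)) + if j ∈ S then ∫ x in (ε * q₀)..(ε * q₁),
          (1 / (Aper (x / ε) + Bper (x / ε)) - 1 / Aper (x / ε)) else 0 := fun j => by
    have shiftA := Function.Periodic.intervalIntegral_comp_div_add_nat
      (show Function.Periodic (fun y => 1 / Aper y) 1 from fun y => by simp only [hAp y])
      ε j 0 1
    have shiftAB := Function.Periodic.intervalIntegral_comp_div_add_nat
      (show Function.Periodic (fun y => 1 / (Aper y + Bper y) - 1 / Aper y) 1 from
        fun y => by simp only [hAp y, hBp y]) ε j q₀ q₁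
    simp only [add_zero, mul_zero, mul_one] at shiftA
    rw [integral_one_div_sampleCoeff_cell hε hq₀ hq₀₁ hq₁ hi hiA hiAB j, shiftA, shiftAB]
  have hsum := sum_integral_adjacent_intervals (μ := volume)
    (f := fun x => 1 / sampleCoeff Aper Bper ε q₀ q₁ S x) (a := fun k : ℕ => ε * k) (n := N)
    fun k _ => hi _ _
  simp only [Nat.cast_add, Nat.cast_one, Nat.cast_zero, mul_zero, cell] at hsum
  rw [mul_comm (N : ℝ) ε, ← hsum, Finset.sum_add_distrib, Finset.sum_const, Finset.card_range,
    Finset.sum_ite_mem, Finset.inter_eq_right.2 hS, Finset.sum_const, nsmul_eq_mul, nsmul_eq_mul]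

lemma div_le_integral_one_div_sampleCoeff (hε : 0 < ε) (hα : 0 < α)
    (hAm : Measurable Aper) (hBm : Measurable Bper)
    (hA : ∀ y, Aper y ∈ Icc α β) (hAB : ∀ y, Aper y + Bper y ∈ Icc α β) (N : ℕ) :
    N * ε / β ≤ ∫ x in (0 : ℝ)..(N * ε), 1 / sampleCoeff Aper Bper ε q₀ q₁ S x := by
  have hmem := sampleCoeff_mem (ε := ε) (q₀ := q₀) (q₁ := q₁) (S := S) hA hAB
  simpa using div_le_integral_one_div (a := 0) (b := N * ε) (by positivity)
    (fun x => hα.trans_le (hmem x).1) (fun x => (hmem x).2)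
    (intervalIntegrable_one_div_of_le (measurable_sampleCoeff hAm hBm) hα (fun x => (hmem x).1) _ _)

end SampleCoeff

theorem stmt_7_general (α β ε q₀ q₁ : ℝ) (Aper Bper : ℝ → ℝ)
    (hα : 0 < α) (hε : 0 < ε)
    (hAmeas : Measurable Aper) (hBmeas : Measurable Bper)
    (hAper : Function.Periodic Aper 1) (hBper : Function.Periodic Bper 1)
    (hAbd : ∀ y, α ≤ Aper y ∧ Aper y ≤ β)
    (hABbd : ∀ y, α ≤ Aper y + Bper y ∧ Aper y + Bper y ≤ β)
    (hq0 : 0 ≤ q₀) (hq01 : q₀ ≤ q₁) (hq1 : q₁ ≤ 1)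
    (N : ℕ) (hN : 1 ≤ N) (S : Finset ℕ) (hS : S ⊆ Finset.range N)
    (A : ℝ → ℝ)
    (hAdef : ∀ x, (∃ j ∈ S, x ∈ Set.Icc (ε * ((j : ℝ) + q₀)) (ε * ((j : ℝ) + q₁)))
        → A x = Aper (x / ε) + Bper (x / ε))
    (hAout : ∀ x, ¬ (∃ j ∈ S, x ∈ Set.Icc (ε * ((j : ℝ) + q₀)) (ε * ((j : ℝ) + q₁)))
        → A x = Aper (x / ε)) :
    let H : ℝ := (N : ℝ) * ε
    let θ : ℝ := (S.card : ℝ) / (N : ℝ)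
    let Abar : ℝ := ∫ x in (0 : ℝ)..ε, 1 / Aper (x / ε)
    let Adef : ℝ := ∫ x in (ε * q₀)..(ε * q₁),
        (1 / (Aper (x / ε) + Bper (x / ε)) - 1 / Aper (x / ε))
    |H / (∫ x in (0 : ℝ)..H, 1 / A x)
        - ((1 - (S.card : ℝ)) * H / ((N : ℝ) * Abar)
            + (S.card : ℝ) * H / ((N : ℝ) * Abar + Adef))|
      ≤ (q₁ - q₀) ^ 2 * β ^ 3 * (1 / α - 1 / β) ^ 2 * ((ε / H) * θ + 2 * θ ^ 2) := by
  intro H θ Abar Adef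
  have hβ : 0 < β := hα.trans_le ((hAbd 0).1.trans (hAbd 0).2)
  have hA : A = sampleCoeff Aper Bper ε q₀ q₁ S := funext fun x => by
    by_cases hx : x ∈ defectSet ε q₀ q₁ S
    · rw [sampleCoeff, if_pos hx, hAdef x (mem_defectSet.1 hx)]
    · rw [sampleCoeff, if_neg hx, hAout x (mt mem_defectSet.2 hx)]
  have total : ∀ T ⊆ Finset.range N, ∫ x in (0 : ℝ)..H, 1 / sampleCoeff Aper Bper ε q₀ q₁ T x
      = N * Abar + T.card * Adef := fun T hT =>
    integral_one_div_sampleCoeff hε hq0 hq01 hq1 hAmeas hBmeas hAper hBper hα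
      (fun y => (hAbd y).1) (fun y => (hABbd y).1) hT
  have lower : ∀ T, H / β ≤ ∫ x in (0 : ℝ)..H, 1 / sampleCoeff Aper Bper ε q₀ q₁ T x :=
    fun _ => div_le_integral_one_div_sampleCoeff hε hα hAmeas hBmeas hAbd hABbd N
  have hoffline : H / β ≤ N * Abar := by
    have := (lower ∅).trans_eq (total ∅ (Finset.empty_subset _))
    rwa [Finset.card_empty, Nat.cast_zero, zero_mul, add_zero] at this
  have hsingle : H / β ≤ N * Abar + Adef := by
    have := (lower {0}).trans_eq (total {0} (Finset.singleton_subset_iff.2 (Finset.mem_range.2 hN)))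
    rwa [Finset.card_singleton, Nat.cast_one, one_mul] at this
  have hsample : H / β ≤ N * Abar + S.card * Adef := (lower S).trans_eq (total S hS)
  have hdefect : |Adef| ≤ (1 / α - 1 / β) * (ε * (q₁ - q₀)) := by
    have := abs_integral_one_div_sub_one_div_le hα (fun y => hABbd (y / ε))
      (fun y => hAbd (y / ε)) (ε * q₀) (ε * q₁)
    rwa [← mul_sub, abs_of_nonneg (mul_nonneg hε.le (sub_nonneg.2 hq01))] at this
  rw [hA, total S hS]
  calc _ ≤ H * (S.card * (S.card - 1)) * Adef ^ 2 / (H / β) ^ 3 :=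
        abs_div_sub_harmonic_combination_le S.card (by positivity) (by positivity)
          hoffline hsingle hsample
    _ ≤ _ := consistency_bound_of_abs_le hN S.card hε hβ hdefect

/-- One-dimensional consistency error bound for the harmonic means: the
harmonic mean of a sample coefficient with `k` defects is close to the
combined offline harmonic mean. -/
theorem stmt_7 (α β ε q₀ q₁ : ℝ) (Aper Bper : ℝ → ℝ)
    (hα : 0 < α) (hαβ : α ≤ β) (hε : 0 < ε)
    (hAmeas : Measurable Aper) (hBmeas : Measurable Bper)
    (hAper : Function.Periodic Aper 1) (hBper : Function.Periodic Bper 1)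
    (hAbd : ∀ y, α ≤ Aper y ∧ Aper y ≤ β)
    (hABbd : ∀ y, α ≤ Aper y + Bper y ∧ Aper y + Bper y ≤ β)
    (hq0 : 0 ≤ q₀) (hq01 : q₀ ≤ q₁) (hq1 : q₁ ≤ 1)
    (N : ℕ) (hN : 1 ≤ N) (S : Finset ℕ) (hS : S ⊆ Finset.range N)
    (A : ℝ → ℝ)
    (hAdef : ∀ x, (∃ j ∈ S, x ∈ Set.Icc (ε * ((j : ℝ) + q₀)) (ε * ((j : ℝ) + q₁)))
        → A x = Aper (x / ε) + Bper (x / ε))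
    (hAout : ∀ x, ¬ (∃ j ∈ S, x ∈ Set.Icc (ε * ((j : ℝ) + q₀)) (ε * ((j : ℝ) + q₁)))
        → A x = Aper (x / ε)) :
    let H : ℝ := (N : ℝ) * ε
    let θ : ℝ := (S.card : ℝ) / (N : ℝ)
    let Abar : ℝ := ∫ x in (0 : ℝ)..ε, 1 / Aper (x / ε)
    let Adef : ℝ := ∫ x in (ε * q₀)..(ε * q₁),
        (1 / (Aper (x / ε) + Bper (x / ε)) - 1 / Aper (x / ε))
    |H / (∫ x in (0 : ℝ)..H, 1 / A x)
        - ((1 - (S.card : ℝ)) * H / ((N : ℝ) * Abar)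
            + (S.card : ℝ) * H / ((N : ℝ) * Abar + Adef))|
      ≤ (q₁ - q₀) ^ 2 * β ^ 3 * (1 / α - 1 / β) ^ 2 * ((ε / H) * θ + 2 * θ ^ 2) :=
  stmt_7_general α β ε q₀ q₁ Aper Bper hα hε hAmeas hBmeas hAper hBper hAbd hABbd hq0 hq01 hq1 N hN
    S hS A hAdef hAout
end

section
/- Let N ∈ ℕ, let A, A_0, …, A_N : X → ℝ be measurable with α ≤ A(x) ≤ β and α ≤ A_i(x) ≤ β for 𝔪-a.e. x and all i, let μ_0,…,μ_N ∈ ℝ with Σ_{i=0}^N μ_i = 1, and set Ā := Σ_{i=0}^N μ_i A_i. Let W ⊆ L² be a closed linear subspace, g ∈ L², let c ∈ W be the A-corrector of g and c_i ∈ W the A_i-corrector of g for each i. Then ‖c − Σ_{i=0}^N μ_i c_i‖_A ≤ ‖(A^{1/2} − A^{−1/2}·Ā)·g − Σ_{i=0}^N μ_i (A^{1/2} − A^{−1/2}·A_i)·c_i‖_{L²}. -/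
/-!
Put `w = c - ∑ i, μᵢ cᵢ ∈ W` and let `r` be the residual on the right-hand side. Pointwise,
`⟪r, √A w⟫ - A ‖w‖² = A ⟪g - c, w⟫ - ∑ i, μᵢ Aᵢ ⟪g - cᵢ, w⟫`, and testing the corrector equations
with `w` makes every term on the right integrate to zero. Hence `‖√A w‖²_{L²} = ⟪r, √A w⟫_{L²}`,
and Cauchy–Schwarz in `L²` gives `‖√A w‖ ≤ ‖r‖`.
-/

open MeasureTheory
open scoped ENNReal RealInnerProductSpace

section Pointwise

variable {E ι : Type*} [NormedAddCommGroup E] [InnerProductSpace ℝ E] [Fintype ι]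

noncomputable def correctorResidual (a : ℝ) (as μs : ι → ℝ) (g : E) (cs : ι → E) : E :=
  (√a - (∑ i, μs i * as i) / √a) • g - ∑ i, μs i • ((√a - as i / √a) • cs i)

lemma norm_sqrt_smul_sq {a : ℝ} (ha : 0 ≤ a) (v : E) : ‖√a • v‖ ^ 2 = a * ‖v‖ ^ 2 := by
  rw [norm_smul, mul_pow, Real.norm_of_nonneg (Real.sqrt_nonneg a), Real.sq_sqrt ha]

lemma inner_correctorResidual_sub_norm_sq {a : ℝ} (ha : 0 < a) (as μs : ι → ℝ)
    {g c w : E} {cs : ι → E} (hw : w = c - ∑ i, μs i • cs i) :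
    ⟪correctorResidual a as μs g cs, √a • w⟫ - ‖√a • w‖ ^ 2
      = a * (⟪g, w⟫ - ⟪c, w⟫) - ∑ i, μs i * (as i * (⟪g, w⟫ - ⟪cs i, w⟫)) := by
  have hsqrt : √a ≠ 0 := (Real.sqrt_pos.2 ha).ne'
  have key (t : ℝ) (v : E) : ⟪(√a - t / √a) • v, √a • w⟫ = (a - t) * ⟪v, w⟫ := by
    rw [real_inner_smul_left, real_inner_smul_right, ← mul_assoc, sub_mul,
      div_mul_cancel₀ t hsqrt, Real.mul_self_sqrt ha.le]
  have hww : ⟪w, w⟫ = ⟪c, w⟫ - ∑ i, μs i * ⟪cs i, w⟫ := by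
    nth_rewrite 1 [hw]
    simp only [inner_sub_left, sum_inner, real_inner_smul_left]
  rw [correctorResidual, norm_sqrt_smul_sq ha.le, ← real_inner_self_eq_norm_sq, hww]
  simp only [inner_sub_left, sum_inner, real_inner_smul_left, key, Finset.sum_mul, Finset.mul_sum,
    mul_sub, sub_mul, Finset.sum_sub_distrib]
  ring_nf

end Pointwise

lemma norm_le_norm_of_norm_sq_eq_inner {H : Type*} [NormedAddCommGroup H] [InnerProductSpace ℝ H]
    {r s : H} (h : ‖s‖ ^ 2 = ⟪r, s⟫) : ‖s‖ ≤ ‖r‖ := by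
  have hle : ‖s‖ * ‖s‖ ≤ ‖r‖ * ‖s‖ := by rw [← sq, h]; exact real_inner_le_norm r s
  rcases (norm_nonneg s).eq_or_lt with hs | hs
  · rw [← hs]; exact norm_nonneg r
  · exact le_of_mul_le_mul_right hle hs

namespace MeasureTheory

variable {X E : Type*} [MeasurableSpace X] {μ : Measure X}
  [NormedAddCommGroup E] [InnerProductSpace ℝ E]

lemma MemLp.inner_toLp_toLp {f g : X → E} (hf : MemLp f 2 μ) (hg : MemLp g 2 μ) :
    ⟪hf.toLp f, hg.toLp g⟫ = ∫ x, ⟪f x, g x⟫ ∂μ := by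
  rw [L2.inner_def]
  refine integral_congr_ae ?_
  filter_upwards [hf.coeFn_toLp, hg.coeFn_toLp] with x hfx hgx
  rw [hfx, hgx]

lemma MemLp.norm_toLp_two {f : X → E} (hf : MemLp f 2 μ) :
    ‖hf.toLp f‖ = √(∫ x, ‖f x‖ ^ 2 ∂μ) := by
  rw [← Real.sqrt_sq (norm_nonneg _), ← real_inner_self_eq_norm_sq, hf.inner_toLp_toLp hf]
  simp only [real_inner_self_eq_norm_sq]

lemma sqrt_integral_norm_sq_le_of_eq_integral_inner {r s : X → E} (hr : MemLp r 2 μ)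
    (hs : MemLp s 2 μ) (h : ∫ x, ‖s x‖ ^ 2 ∂μ = ∫ x, ⟪r x, s x⟫ ∂μ) :
    √(∫ x, ‖s x‖ ^ 2 ∂μ) ≤ √(∫ x, ‖r x‖ ^ 2 ∂μ) := by
  rw [← hs.norm_toLp_two, ← hr.norm_toLp_two]
  refine norm_le_norm_of_norm_sq_eq_inner ?_
  rw [hs.norm_toLp_two, Real.sq_sqrt (integral_nonneg fun x => sq_nonneg _), h,
    hr.inner_toLp_toLp hs]

lemma memLp_top_of_ae_nonneg_of_ae_le {f : X → ℝ} (hf : AEStronglyMeasurable f μ) {b : ℝ}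
    (h : ∀ᵐ x ∂μ, 0 ≤ f x ∧ f x ≤ b) : MemLp f ∞ μ :=
  memLp_top_of_bound hf b (h.mono fun _ hx => (Real.norm_of_nonneg hx.1).trans_le hx.2)

lemma memLp_top_sub_div {s t : X → ℝ} (hs : MemLp s ∞ μ) (hs_inv : MemLp (fun x => (s x)⁻¹) ∞ μ)
    (ht : MemLp t ∞ μ) : MemLp (fun x => s x - t x / s x) ∞ μ := by
  simp_rw [div_eq_mul_inv]
  exact hs.sub (hs_inv.mul ht)

lemma integrable_mul_inner {φ : X → ℝ} (hφ : MemLp φ ∞ μ) (f g : Lp E 2 μ) :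
    Integrable (fun x => φ x * ⟪f x, g x⟫) μ :=
  (L2.integrable_inner f g).mul_of_top_right hφ

lemma integrable_mul_inner_sub_inner {φ : X → ℝ} (hφ : MemLp φ ∞ μ) (f g w : Lp E 2 μ) :
    Integrable (fun x => φ x * (⟪f x, w x⟫ - ⟪g x, w x⟫)) μ := by
  simp only [mul_sub]
  exact (integrable_mul_inner hφ f w).sub (integrable_mul_inner hφ g w)

lemma integral_mul_inner_sub_inner_eq_zero {φ : X → ℝ} (hφ : MemLp φ ∞ μ) {f g w : Lp E 2 μ}
    (h : ∫ x, φ x * ⟪g x, w x⟫ ∂μ = ∫ x, φ x * ⟪f x, w x⟫ ∂μ) :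
    ∫ x, φ x * (⟪f x, w x⟫ - ⟪g x, w x⟫) ∂μ = 0 := by
  simp_rw [mul_sub]
  rw [integral_sub (integrable_mul_inner hφ f w) (integrable_mul_inner hφ g w), h, sub_self]

variable {ι : Type*} [Fintype ι]

lemma memLp_correctorResidual {A : X → ℝ} {As : ι → X → ℝ}
    (hs : MemLp (fun x => √(A x)) ∞ μ) (hs_inv : MemLp (fun x => (√(A x))⁻¹) ∞ μ)
    (hAs : ∀ i, MemLp (As i) ∞ μ) (μs : ι → ℝ) (g : Lp E 2 μ) (cs : ι → Lp E 2 μ) :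
    MemLp (fun x => correctorResidual (A x) (fun i => As i x) μs (g x) (fun i => cs i x)) 2 μ := by
  have hAbar : MemLp (fun x => ∑ i, μs i * As i x) ∞ μ :=
    memLp_finsetSum _ fun i _ => (hAs i).const_mul (μs i)
  exact ((Lp.memLp g).smul (memLp_top_sub_div hs hs_inv hAbar)).sub
    (memLp_finsetSum _ fun i _ =>
      ((Lp.memLp (cs i)).smul (memLp_top_sub_div hs hs_inv (hAs i))).const_smul (μs i))

lemma Lp.coeFn_sub_sum_smul {p : ℝ≥0∞} (c : Lp E p μ) (μs : ι → ℝ) (cs : ι → Lp E p μ) :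
    ⇑(c - ∑ i, μs i • cs i) =ᵐ[μ] fun x => c x - ∑ i, μs i • cs i x := by
  filter_upwards [Lp.coeFn_sub c (∑ i, μs i • cs i),
    Lp.coeFn_fun_finsetSum Finset.univ fun i => μs i • cs i,
    ae_all_iff.2 fun i => Lp.coeFn_smul (μs i) (cs i)] with x hsub hsum hsmul
  rw [hsub, Pi.sub_apply, hsum]
  simp only [hsmul, Pi.smul_apply]

lemma integral_norm_sq_eq_integral_inner_correctorResidual {A : X → ℝ} {As : ι → X → ℝ}
    (hApos : ∀ᵐ x ∂μ, 0 < A x) (hA : MemLp A ∞ μ) (hAs : ∀ i, MemLp (As i) ∞ μ) (μs : ι → ℝ)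
    {g c w : Lp E 2 μ} {cs : ι → Lp E 2 μ} (hw : w = c - ∑ i, μs i • cs i)
    (hc : ∫ x, A x * ⟪c x, w x⟫ ∂μ = ∫ x, A x * ⟪g x, w x⟫ ∂μ)
    (hcs : ∀ i, ∫ x, As i x * ⟪cs i x, w x⟫ ∂μ = ∫ x, As i x * ⟪g x, w x⟫ ∂μ) :
    ∫ x, ‖√(A x) • w x‖ ^ 2 ∂μ
      = ∫ x, ⟪correctorResidual (A x) (fun i => As i x) μs (g x) (fun i => cs i x),
          √(A x) • w x⟫ ∂μ := by
  set D : X → ℝ := fun x => A x * (⟪g x, w x⟫ - ⟪c x, w x⟫)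
    - ∑ i, μs i * (As i x * (⟪g x, w x⟫ - ⟪cs i x, w x⟫))
  have hpt : ∀ᵐ x ∂μ, ⟪correctorResidual (A x) (fun i => As i x) μs (g x) (fun i => cs i x),
      √(A x) • w x⟫ = ‖√(A x) • w x‖ ^ 2 + D x := by
    filter_upwards [hApos, hw ▸ Lp.coeFn_sub_sum_smul c μs cs] with x hx hwx
    exact eq_add_of_sub_eq' (inner_correctorResidual_sub_norm_sq hx _ μs hwx)
  have hS : Integrable (fun x => ‖√(A x) • w x‖ ^ 2) μ :=
    (integrable_mul_inner hA w w).congr <| hApos.mono fun x hx => by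
      simp only [norm_sqrt_smul_sq hx.le, real_inner_self_eq_norm_sq]
  have hterm (i : ι) := (integrable_mul_inner_sub_inner (hAs i) g (cs i) w).const_mul (μs i)
  have hsum := integrable_finsetSum Finset.univ fun i _ => hterm i
  have hD : Integrable D μ := (integrable_mul_inner_sub_inner hA g c w).sub hsum
  have hD0 : ∫ x, D x ∂μ = 0 := by
    rw [integral_sub (integrable_mul_inner_sub_inner hA g c w) hsum,
      integral_mul_inner_sub_inner_eq_zero hA hc, integral_finsetSum _ fun i _ => hterm i]
    simp [integral_const_mul, integral_mul_inner_sub_inner_eq_zero (hAs _) (hcs _)]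
  rw [integral_congr_ae hpt, integral_add hS hD, hD0, add_zero]

end MeasureTheory

theorem stmt_11_general {X : Type*} [MeasurableSpace X] (μ : Measure X) (d : ℕ)
    (α β : ℝ) (hα : 0 < α)
    (N : ℕ) (A : X → ℝ) (As : Fin (N + 1) → X → ℝ)
    (hAmeas : Measurable A) (hAsmeas : ∀ i, Measurable (As i))
    (hAbd : ∀ᵐ x ∂μ, α ≤ A x ∧ A x ≤ β)
    (hAsbd : ∀ i, ∀ᵐ x ∂μ, α ≤ As i x ∧ As i x ≤ β)
    (μs : Fin (N + 1) → ℝ)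
    (W : Submodule ℝ (Lp (EuclideanSpace ℝ (Fin d)) 2 μ))
    (g c : Lp (EuclideanSpace ℝ (Fin d)) 2 μ)
    (cs : Fin (N + 1) → Lp (EuclideanSpace ℝ (Fin d)) 2 μ)
    (hcW : c ∈ W)
    (hc : ∀ w ∈ W, (∫ x, A x * (inner ℝ (c x) (w x) : ℝ) ∂μ)
        = ∫ x, A x * (inner ℝ (g x) (w x) : ℝ) ∂μ)
    (hcsW : ∀ i, cs i ∈ W)
    (hcs : ∀ i, ∀ w ∈ W, (∫ x, As i x * (inner ℝ (cs i x) (w x) : ℝ) ∂μ)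
        = ∫ x, As i x * (inner ℝ (g x) (w x) : ℝ) ∂μ) :
    Real.sqrt (∫ x, A x * ‖(c - ∑ i, μs i • cs i) x‖ ^ 2 ∂μ)
      ≤ Real.sqrt (∫ x,
          ‖(Real.sqrt (A x) - (∑ i, μs i * As i x) / Real.sqrt (A x)) • g x
            - ∑ i, μs i • ((Real.sqrt (A x) - As i x / Real.sqrt (A x)) • cs i x)‖ ^ 2 ∂μ) := by
  have hApos : ∀ᵐ x ∂μ, 0 < A x := hAbd.mono fun x hx => hα.trans_le hx.1
  have hA : MemLp A ∞ μ := memLp_top_of_ae_nonneg_of_ae_le hAmeas.aestronglyMeasurable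
    (hAbd.mono fun x hx => ⟨hα.le.trans hx.1, hx.2⟩)
  have hAs (i : Fin (N + 1)) : MemLp (As i) ∞ μ :=
    memLp_top_of_ae_nonneg_of_ae_le (hAsmeas i).aestronglyMeasurable
      ((hAsbd i).mono fun x hx => ⟨hα.le.trans hx.1, hx.2⟩)
  have hs : MemLp (fun x => √(A x)) ∞ μ :=
    memLp_top_of_ae_nonneg_of_ae_le hAmeas.sqrt.aestronglyMeasurable
      (hAbd.mono fun x hx => ⟨Real.sqrt_nonneg _, Real.sqrt_le_sqrt hx.2⟩)
  have hs_inv : MemLp (fun x => (√(A x))⁻¹) ∞ μ :=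
    memLp_top_of_ae_nonneg_of_ae_le hAmeas.sqrt.inv.aestronglyMeasurable
      (hAbd.mono fun x hx => ⟨inv_nonneg.2 (Real.sqrt_nonneg _),
        inv_anti₀ (Real.sqrt_pos.2 hα) (Real.sqrt_le_sqrt hx.1)⟩)
  set w := c - ∑ i, μs i • cs i with hw
  have hwW : w ∈ W := W.sub_mem hcW (W.sum_mem fun i _ => W.smul_mem (μs i) (hcsW i))
  have hweight : ∫ x, A x * ‖w x‖ ^ 2 ∂μ = ∫ x, ‖√(A x) • w x‖ ^ 2 ∂μ :=
    integral_congr_ae (hApos.mono fun x hx => (norm_sqrt_smul_sq hx.le _).symm)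
  rw [hweight]
  exact sqrt_integral_norm_sq_le_of_eq_integral_inner (memLp_correctorResidual hs hs_inv hAs μs g cs)
    ((Lp.memLp w).smul hs)
    (integral_norm_sq_eq_integral_inner_correctorResidual hApos hA hAs μs hw (hc w hwW)
      fun i => hcs i w hwW)

/-- Abstract corrector-error estimate (equation (4.4) in the proof of
Theorem 4.2): the energy-norm distance between the `A`-corrector and the
combination of the `A_i`-correctors is bounded by the weighted `L²` residual. -/
theorem stmt_11 {X : Type*} [MeasurableSpace X] (μ : Measure X) (d : ℕ)
    (α β : ℝ) (hα : 0 < α) (hαβ : α ≤ β)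
    (N : ℕ) (A : X → ℝ) (As : Fin (N + 1) → X → ℝ)
    (hAmeas : Measurable A) (hAsmeas : ∀ i, Measurable (As i))
    (hAbd : ∀ᵐ x ∂μ, α ≤ A x ∧ A x ≤ β)
    (hAsbd : ∀ i, ∀ᵐ x ∂μ, α ≤ As i x ∧ As i x ≤ β)
    (μs : Fin (N + 1) → ℝ) (hμs : ∑ i, μs i = 1)
    (W : Submodule ℝ (Lp (EuclideanSpace ℝ (Fin d)) 2 μ))
    (hW : IsClosed (W : Set (Lp (EuclideanSpace ℝ (Fin d)) 2 μ)))
    (g c : Lp (EuclideanSpace ℝ (Fin d)) 2 μ)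
    (cs : Fin (N + 1) → Lp (EuclideanSpace ℝ (Fin d)) 2 μ)
    (hcW : c ∈ W)
    (hc : ∀ w ∈ W, (∫ x, A x * (inner ℝ (c x) (w x) : ℝ) ∂μ)
        = ∫ x, A x * (inner ℝ (g x) (w x) : ℝ) ∂μ)
    (hcsW : ∀ i, cs i ∈ W)
    (hcs : ∀ i, ∀ w ∈ W, (∫ x, As i x * (inner ℝ (cs i x) (w x) : ℝ) ∂μ)
        = ∫ x, As i x * (inner ℝ (g x) (w x) : ℝ) ∂μ) :
    Real.sqrt (∫ x, A x * ‖(c - ∑ i, μs i • cs i) x‖ ^ 2 ∂μ)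
      ≤ Real.sqrt (∫ x,
          ‖(Real.sqrt (A x) - (∑ i, μs i * As i x) / Real.sqrt (A x)) • g x
            - ∑ i, μs i • ((Real.sqrt (A x) - As i x / Real.sqrt (A x)) • cs i x)‖ ^ 2 ∂μ) :=
  stmt_11_general μ d α β hα N A As hAmeas hAsmeas hAbd hAsbd μs W g c cs hcW hc hcsW hcs
end

section
/- Let N ∈ ℕ, let A, A_0, …, A_N : X → ℝ be measurable with α ≤ A(x) ≤ β and α ≤ A_i(x) ≤ β for 𝔪-a.e. x and all i, let μ_0,…,μ_N ∈ ℝ with Σ_{i=0}^N μ_i = 1, and set Ā := Σ_{i=0}^N μ_i A_i. Let W ⊆ L² be a closed linear subspace, g ∈ L², let c ∈ W be the A-corrector of g and c_i ∈ W the A_i-corrector of g, and set E := ‖(A^{1/2} − A^{−1/2}·Ā)·g − Σ_{i=0}^N μ_i (A^{1/2} − A^{−1/2}·A_i)·c_i‖_{L²}. Then for every w ∈ L², | ⟨g − c, w⟩_A − Σ_{i=0}^N μ_i ⟨g − c_i, w⟩_{A_i} | ≤ 2·E·‖w‖_A. -/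
/-!
Write `a` for the `A`-weighted inner product and `c̄ = Σ μ_i c_i`. Pointwise, `√A` times the
integrand `h` of `E` equals `A (g - c̄) - Σ μ_i A_i (g - c_i)`, so the consistency error
`v ↦ a(g - c̄, v) - Σ μ_i ⟨g - c_i, v⟩_{A_i}` is `a(q, ·)` for `q = h / √A ∈ L²`, and
`‖q‖_a = E`. The defect `z = c̄ - c` lies in `W`, so the corrector equations give
`a(z, z) = -a(q, z)`, whence `‖z‖_a ≤ E` by Cauchy–Schwarz. The quantity to be bounded is
`a(q, w) + a(z, w)`, and Cauchy–Schwarz bounds each term by `E ‖w‖_a`.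
-/

open scoped InnerProductSpace ENNReal

namespace LinearMap.BilinForm

variable {V : Type*} [AddCommGroup V] [Module ℝ V] {a : LinearMap.BilinForm ℝ V}

theorem abs_apply_le_sqrt_mul_sqrt (ha : ∀ v, 0 ≤ a v v) (hsymm : a.IsSymm) (u v : V) :
    |a u v| ≤ √(a u u) * √(a v v) := by
  rw [← Real.sqrt_mul (ha u)]
  exact Real.abs_le_sqrt (a.apply_sq_le_of_symm ha (isSymm_iff.1 hsymm) u v)

def IsCorrector (a : LinearMap.BilinForm ℝ V) (W : Submodule ℝ V) (g c : V) : Prop :=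
  c ∈ W ∧ ∀ w ∈ W, a c w = a g w

theorem abs_apply_sub_le_of_isCorrector (ha : ∀ v, 0 ≤ a v v) (hsymm : a.IsSymm)
    {W : Submodule ℝ V} {g c c' q : V} (hc : a.IsCorrector W g c) (hc' : c' ∈ W)
    {ℓ : V → ℝ} (hℓ : ∀ w ∈ W, ℓ w = 0) (hq : ∀ v, a (g - c') v - ℓ v = a q v) (w : V) :
    |a (g - c) w - ℓ w| ≤ 2 * √(a q q) * √(a w w) := by
  have hzW : c' - c ∈ W := W.sub_mem hc' hc.1
  have hzz : a (c' - c) (c' - c) = -a q (c' - c) := by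
    rw [← hq, hℓ _ hzW, map_sub a g c', map_sub a c' c, LinearMap.sub_apply,
      LinearMap.sub_apply, hc.2 _ hzW]
    ring
  have hz : √(a (c' - c) (c' - c)) ≤ √(a q q) := by
    have h : a (c' - c) (c' - c) ≤ √(a q q) * √(a (c' - c) (c' - c)) := by
      nth_rewrite 1 [hzz]
      exact (neg_le_abs _).trans (abs_apply_le_sqrt_mul_sqrt ha hsymm q _)
    nlinarith [Real.mul_self_sqrt (ha (c' - c)), Real.sqrt_nonneg (a (c' - c) (c' - c)),
      Real.sqrt_nonneg (a q q)]
  have hsplit : a (g - c) w - ℓ w = a q w + a (c' - c) w := by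
    rw [← hq w, ← sub_add_sub_cancel g c' c, map_add, LinearMap.add_apply]
    ring
  calc |a (g - c) w - ℓ w| = |a q w + a (c' - c) w| := by rw [hsplit]
    _ ≤ |a q w| + |a (c' - c) w| := abs_add_le _ _
    _ ≤ √(a q q) * √(a w w) + √(a (c' - c) (c' - c)) * √(a w w) :=
      add_le_add (abs_apply_le_sqrt_mul_sqrt ha hsymm q w)
        (abs_apply_le_sqrt_mul_sqrt ha hsymm _ w)
    _ ≤ 2 * √(a q q) * √(a w w) := by nlinarith [Real.sqrt_nonneg (a w w)]

end LinearMap.BilinForm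

theorem sqrt_smul_sub_sum_smul_div_smul_sub {ι F : Type*} [AddCommGroup F] [Module ℝ F]
    (s : Finset ι) (r : ℝ) (m t : ι → ℝ) (g : F) (c : ι → F) :
    √r • ((g - ∑ i ∈ s, m i • c i) - ∑ i ∈ s, m i • (t i / r) • (g - c i))
      = (√r - (∑ i ∈ s, m i * t i) / √r) • g - ∑ i ∈ s, m i • (√r - t i / √r) • c i := by
  have hdiv i : √r * (t i / r) = t i / √r := by
    rw [mul_div_left_comm, Real.sqrt_div_self, div_eq_mul_inv]
  simp only [smul_sub, sub_smul, Finset.smul_sum, Finset.sum_smul, Finset.sum_sub_distrib,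
    smul_smul, Finset.sum_div, mul_div_assoc, mul_left_comm _ (m _), hdiv, mul_comm _ (m _)]
  abel

namespace MeasureTheory

variable {X : Type*} [MeasurableSpace X] {μ : Measure X}

theorem memLp_top_of_ae_mem_Icc {f : X → ℝ} (hf : AEStronglyMeasurable f μ) {s t : ℝ}
    (h : ∀ᵐ x ∂μ, s ≤ f x ∧ f x ≤ t) : MemLp f ∞ μ :=
  memLp_top_of_bound hf (max |s| |t|) (h.mono fun _ hx => abs_le_max_abs_abs hx.1 hx.2)

theorem Lp.coeFn_finsetSum_ae_eq {E : Type*} [NormedAddCommGroup E] {p : ℝ≥0∞} {ι : Type*}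
    (s : Finset ι) {f : ι → Lp E p μ} {g : ι → X → E} (h : ∀ i ∈ s, f i =ᵐ[μ] g i) :
    ⇑(∑ i ∈ s, f i) =ᵐ[μ] ∑ i ∈ s, g i := by
  classical
  induction s using Finset.induction_on with
  | empty => simpa using Lp.coeFn_zero E p μ
  | insert j s hj ih =>
    rw [Finset.sum_insert hj, Finset.sum_insert hj]
    exact (Lp.coeFn_add _ _).trans ((h j (s.mem_insert_self j)).add
      (ih fun i hi => h i (Finset.mem_insert_of_mem hi)))

variable {F : Type*} [NormedAddCommGroup F] [InnerProductSpace ℝ F]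

noncomputable def weightedInner (a : Lp ℝ ∞ μ) : LinearMap.BilinForm ℝ (Lp F 2 μ) :=
  innerₗ (Lp F 2 μ) ∘ₗ (ContinuousLinearMap.lsmul ℝ ℝ).holderₗ μ ∞ 2 2 a

theorem weightedInner_apply (a : Lp ℝ ∞ μ) (u v : Lp F 2 μ) :
    weightedInner a u v = ∫ x, a x * ⟪u x, v x⟫_ℝ ∂μ := by
  simp only [weightedInner, LinearMap.comp_apply, ContinuousLinearMap.holderₗ_apply_apply,
    innerₗ_apply_apply, L2.inner_def]
  refine integral_congr_ae ?_
  filter_upwards [(ContinuousLinearMap.lsmul ℝ ℝ).coeFn_holder (r := 2) a u] with x hx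
  rw [hx, ContinuousLinearMap.lsmul_apply, real_inner_smul_left]

theorem weightedInner_toLp {a : X → ℝ} (ha : MemLp a ∞ μ) (u v : Lp F 2 μ) :
    weightedInner (ha.toLp a) u v = ∫ x, a x * ⟪u x, v x⟫_ℝ ∂μ := by
  rw [weightedInner_apply]
  refine integral_congr_ae ?_
  filter_upwards [ha.coeFn_toLp] with x hx
  rw [hx]

theorem weightedInner_isSymm (a : Lp ℝ ∞ μ) :
    (weightedInner a : LinearMap.BilinForm ℝ (Lp F 2 μ)).IsSymm :=
  LinearMap.BilinForm.isSymm_def.2 fun u v => by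
    simp only [weightedInner_apply, real_inner_comm]

theorem weightedInner_self_nonneg {a : Lp ℝ ∞ μ} (ha : 0 ≤ᵐ[μ] a) (u : Lp F 2 μ) :
    0 ≤ weightedInner a u u := by
  rw [weightedInner_apply]
  exact integral_nonneg_of_ae (ha.mono fun x hx => mul_nonneg hx real_inner_self_nonneg)

theorem weightedInner_lpSMul_left {a ρ b : Lp ℝ ∞ μ} (h : ∀ᵐ x ∂μ, a x * ρ x = b x)
    (u v : Lp F 2 μ) : weightedInner a (ρ • u : Lp F 2 μ) v = weightedInner b u v := by
  simp only [weightedInner_apply]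
  refine integral_congr_ae ?_
  filter_upwards [h, Lp.coeFn_lpSMul (r := 2) ρ u] with x hx hρu
  rw [hρu, Pi.smul_apply', real_inner_smul_left, ← mul_assoc, hx]

variable {ι : Type*} [Fintype ι]

/-- With `ρ i = A_i / A`, this is the element `q = h / √A` of the proof idea. -/
noncomputable def consistencyResidual (m : ι → ℝ) (ρ : ι → Lp ℝ ∞ μ) (g : Lp F 2 μ)
    (c : ι → Lp F 2 μ) : Lp F 2 μ :=
  (g - ∑ i, m i • c i) - ∑ i, m i • (ρ i • (g - c i) : Lp F 2 μ)

theorem coeFn_consistencyResidual (m : ι → ℝ) (ρ : ι → Lp ℝ ∞ μ) (g : Lp F 2 μ)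
    (c : ι → Lp F 2 μ) : consistencyResidual m ρ g c =ᵐ[μ]
      fun x => (g x - ∑ i, m i • c i x) - ∑ i, m i • ρ i x • (g x - c i x) := by
  have hc := Lp.coeFn_finsetSum_ae_eq Finset.univ (g := fun i => m i • ⇑(c i))
    fun i _ => Lp.coeFn_smul (m i) (c i)
  have hρ := Lp.coeFn_finsetSum_ae_eq Finset.univ
    (f := fun i => m i • (ρ i • (g - c i) : Lp F 2 μ))
    (g := fun i x => m i • ρ i x • (g x - c i x)) fun i _ => by
      filter_upwards [Lp.coeFn_smul (m i) (ρ i • (g - c i) : Lp F 2 μ),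
        Lp.coeFn_lpSMul (r := 2) (ρ i) (g - c i), Lp.coeFn_sub g (c i)] with x h1 h2 h3
      rw [h1, Pi.smul_apply, h2, Pi.smul_apply', h3, Pi.sub_apply]
  filter_upwards [Lp.coeFn_sub (g - ∑ i, m i • c i) (∑ i, m i • (ρ i • (g - c i) : Lp F 2 μ)),
    Lp.coeFn_sub g (∑ i, m i • c i), hc, hρ] with x h1 h2 h3 h4
  rw [consistencyResidual, h1, Pi.sub_apply, h2, Pi.sub_apply, h3, h4]
  simp only [Finset.sum_apply, Pi.smul_apply]

theorem integral_norm_sq_eq_weightedInner_consistencyResidual {A : X → ℝ}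
    (hA : MemLp A ∞ μ) (hA0 : ∀ᵐ x ∂μ, 0 ≤ A x) {As : ι → X → ℝ} (hρ : ∀ i, MemLp (fun x => As i x / A x) ∞ μ)
    (m : ι → ℝ) (g : Lp F 2 μ) (c : ι → Lp F 2 μ) :
    ∫ x, ‖(√(A x) - (∑ i, m i * As i x) / √(A x)) • g x
        - ∑ i, m i • (√(A x) - As i x / √(A x)) • c i x‖ ^ 2 ∂μ
      = weightedInner (hA.toLp A) (consistencyResidual m (fun i => (hρ i).toLp _) g c)
          (consistencyResidual m (fun i => (hρ i).toLp _) g c) := by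
  rw [weightedInner_toLp]
  refine integral_congr_ae ?_
  filter_upwards [coeFn_consistencyResidual m (fun i => (hρ i).toLp _) g c, hA0,
    ae_all_iff.2 fun i => (hρ i).coeFn_toLp] with x hx hAx hρx
  simp only [hx, hρx, ← sqrt_smul_sub_sum_smul_div_smul_sub, norm_smul, mul_pow,
    Real.norm_eq_abs, sq_abs, Real.sq_sqrt hAx, real_inner_self_eq_norm_sq]

theorem abs_weightedInner_sub_sum_le {a : Lp ℝ ∞ μ} (ha : 0 ≤ᵐ[μ] a) {b ρ : ι → Lp ℝ ∞ μ}
    (hρ : ∀ i, ∀ᵐ x ∂μ, a x * ρ i x = b i x) (m : ι → ℝ) {W : Submodule ℝ (Lp F 2 μ)}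
    {g c : Lp F 2 μ} {cs : ι → Lp F 2 μ} (hc : (weightedInner a).IsCorrector W g c)
    (hcs : ∀ i, (weightedInner (b i)).IsCorrector W g (cs i)) (w : Lp F 2 μ) :
    |weightedInner a (g - c) w - ∑ i, m i * weightedInner (b i) (g - cs i) w|
      ≤ 2 * √(weightedInner a (consistencyResidual m ρ g cs) (consistencyResidual m ρ g cs))
        * √(weightedInner a w w) := by
  have hb i u v : weightedInner (b i) u v = weightedInner a (ρ i • u : Lp F 2 μ) v :=
    (weightedInner_lpSMul_left (hρ i) u v).symm
  refine LinearMap.BilinForm.abs_apply_sub_le_of_isCorrector (c' := ∑ i, m i • cs i)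
    (ℓ := fun v => ∑ i, m i * weightedInner (b i) (g - cs i) v) (weightedInner_self_nonneg ha)
    (weightedInner_isSymm a) hc (W.sum_mem fun i _ => W.smul_mem (m i) (hcs i).1)
    (fun v hv => Finset.sum_eq_zero fun i _ => ?_) (fun v => ?_) w
  · rw [map_sub, LinearMap.sub_apply, (hcs i).2 v hv, sub_self, mul_zero]
  · simp only [hb]
    simp only [consistencyResidual, map_sub, map_sum, map_smul, LinearMap.sub_apply,
      LinearMap.coe_sum, Finset.sum_apply, LinearMap.smul_apply, smul_eq_mul]

end MeasureTheory

open MeasureTheory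

theorem stmt_12_general {X : Type*} [MeasurableSpace X] (μ : Measure X) (d : ℕ)
    (α β : ℝ) (hα : 0 < α)
    (N : ℕ) (A : X → ℝ) (As : Fin (N + 1) → X → ℝ)
    (hAmeas : Measurable A) (hAsmeas : ∀ i, Measurable (As i))
    (hAbd : ∀ᵐ x ∂μ, α ≤ A x ∧ A x ≤ β)
    (hAsbd : ∀ i, ∀ᵐ x ∂μ, α ≤ As i x ∧ As i x ≤ β)
    (μs : Fin (N + 1) → ℝ)
    (W : Submodule ℝ (Lp (EuclideanSpace ℝ (Fin d)) 2 μ))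
    (g c : Lp (EuclideanSpace ℝ (Fin d)) 2 μ)
    (cs : Fin (N + 1) → Lp (EuclideanSpace ℝ (Fin d)) 2 μ)
    (hcW : c ∈ W)
    (hc : ∀ w ∈ W, (∫ x, A x * (inner ℝ (c x) (w x) : ℝ) ∂μ)
        = ∫ x, A x * (inner ℝ (g x) (w x) : ℝ) ∂μ)
    (hcsW : ∀ i, cs i ∈ W)
    (hcs : ∀ i, ∀ w ∈ W, (∫ x, As i x * (inner ℝ (cs i x) (w x) : ℝ) ∂μ)
        = ∫ x, As i x * (inner ℝ (g x) (w x) : ℝ) ∂μ) :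
    let E : ℝ := Real.sqrt (∫ x,
        ‖(Real.sqrt (A x) - (∑ i, μs i * As i x) / Real.sqrt (A x)) • g x
          - ∑ i, μs i • ((Real.sqrt (A x) - As i x / Real.sqrt (A x)) • cs i x)‖ ^ 2 ∂μ)
    ∀ w : Lp (EuclideanSpace ℝ (Fin d)) 2 μ,
      |(∫ x, A x * (inner ℝ ((g - c) x) (w x) : ℝ) ∂μ)
          - ∑ i, μs i * ∫ x, As i x * (inner ℝ ((g - cs i) x) (w x) : ℝ) ∂μ|
        ≤ 2 * E * Real.sqrt (∫ x, A x * ‖w x‖ ^ 2 ∂μ) := by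
  intro E w
  have hApos : ∀ᵐ x ∂μ, 0 < A x := hAbd.mono fun x hx => hα.trans_le hx.1
  have hA : MemLp A ∞ μ := memLp_top_of_ae_mem_Icc hAmeas.aestronglyMeasurable hAbd
  have hAs i : MemLp (As i) ∞ μ :=
    memLp_top_of_ae_mem_Icc (hAsmeas i).aestronglyMeasurable (hAsbd i)
  have hρ i : MemLp (fun x => As i x / A x) ∞ μ := by
    refine memLp_top_of_ae_mem_Icc ((hAsmeas i).div hAmeas).aestronglyMeasurable
      (s := 0) (t := β / α) ?_
    filter_upwards [hAbd, hAsbd i] with x hAx hAsx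
    exact ⟨div_nonneg (hα.le.trans hAsx.1) (hα.le.trans hAx.1),
      div_le_div₀ (hα.le.trans (hAsx.1.trans hAsx.2)) hAsx.2 hα hAx.1⟩
  rw [show E = _ from congrArg Real.sqrt (integral_norm_sq_eq_weightedInner_consistencyResidual
    hA (hApos.mono fun _ h => h.le) hρ μs g cs)]
  simp only [← weightedInner_toLp hA, ← weightedInner_toLp (hAs _), ← real_inner_self_eq_norm_sq]
  refine abs_weightedInner_sub_sum_le ?_ (fun i => ?_) μs
    ⟨hcW, fun v hv => by simpa only [weightedInner_toLp] using hc v hv⟩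
    (fun i => ⟨hcsW i, fun v hv => by simpa only [weightedInner_toLp] using hcs i v hv⟩) w
  · filter_upwards [hA.coeFn_toLp, hApos] with x hAx hpos
    exact hAx ▸ hpos.le
  · filter_upwards [hA.coeFn_toLp, (hρ i).coeFn_toLp, (hAs i).coeFn_toLp, hApos]
      with x hAx hρx hAsx hpos
    rw [hAx, hρx, hAsx, mul_div_cancel₀ _ hpos.ne']

/-- Abstract form of the local consistency estimate (4.3) in the proof of
Theorem 4.2: the difference between the PG-LOD element contribution
`⟨g − c, w⟩_A` and the combined offline contribution `Σ μ_i ⟨g − c_i, w⟩_{A_i}`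
is bounded by `2·E·‖w‖_A`. -/
theorem stmt_12 {X : Type*} [MeasurableSpace X] (μ : Measure X) (d : ℕ)
    (α β : ℝ) (hα : 0 < α) (hαβ : α ≤ β)
    (N : ℕ) (A : X → ℝ) (As : Fin (N + 1) → X → ℝ)
    (hAmeas : Measurable A) (hAsmeas : ∀ i, Measurable (As i))
    (hAbd : ∀ᵐ x ∂μ, α ≤ A x ∧ A x ≤ β)
    (hAsbd : ∀ i, ∀ᵐ x ∂μ, α ≤ As i x ∧ As i x ≤ β)
    (μs : Fin (N + 1) → ℝ) (hμs : ∑ i, μs i = 1)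
    (W : Submodule ℝ (Lp (EuclideanSpace ℝ (Fin d)) 2 μ))
    (hW : IsClosed (W : Set (Lp (EuclideanSpace ℝ (Fin d)) 2 μ)))
    (g c : Lp (EuclideanSpace ℝ (Fin d)) 2 μ)
    (cs : Fin (N + 1) → Lp (EuclideanSpace ℝ (Fin d)) 2 μ)
    (hcW : c ∈ W)
    (hc : ∀ w ∈ W, (∫ x, A x * (inner ℝ (c x) (w x) : ℝ) ∂μ)
        = ∫ x, A x * (inner ℝ (g x) (w x) : ℝ) ∂μ)
    (hcsW : ∀ i, cs i ∈ W)
    (hcs : ∀ i, ∀ w ∈ W, (∫ x, As i x * (inner ℝ (cs i x) (w x) : ℝ) ∂μ)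
        = ∫ x, As i x * (inner ℝ (g x) (w x) : ℝ) ∂μ) :
    let E : ℝ := Real.sqrt (∫ x,
        ‖(Real.sqrt (A x) - (∑ i, μs i * As i x) / Real.sqrt (A x)) • g x
          - ∑ i, μs i • ((Real.sqrt (A x) - As i x / Real.sqrt (A x)) • cs i x)‖ ^ 2 ∂μ)
    ∀ w : Lp (EuclideanSpace ℝ (Fin d)) 2 μ,
      |(∫ x, A x * (inner ℝ ((g - c) x) (w x) : ℝ) ∂μ)
          - ∑ i, μs i * ∫ x, As i x * (inner ℝ ((g - cs i) x) (w x) : ℝ) ∂μ|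
        ≤ 2 * E * Real.sqrt (∫ x, A x * ‖w x‖ ^ 2 ∂μ) :=
  stmt_12_general μ d α β hα N A As hAmeas hAsmeas hAbd hAsbd μs W g c cs hcW hc hcsW hcs
end
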